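/- There is an enumeration operator Γ such that Γ maps every copy of Ê₁ to a linear order with a least element and no greatest element, and every copy of Ê₂ to a linear order with neither least nor greatest element. The operator outputs the set of tuples (x₀,…,xₙ) with x₀ < x₁ < ⋯ < xₙ (as naturals) and each [x_i] (i<n) of size ≥ 2, ordered by: x̄ ≺ ȳ iff x̄ properly extends ȳ, or x_i < y_i at the first index i where they differ. -/

import Mathlib

/-- A finite piece of an atomic diagram of a structure in a language with one
binary relation, with domain a finite set of naturals. -/
structure FinD where
  dom : Finset ℕ
  rel : ℕ → ℕ → Prop

/-- `β` extends `α` as a finite atomic diagram. -/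
def FinD.Ext (α β : FinD) : Prop :=
  α.dom ⊆ β.dom ∧ ∀ x ∈ α.dom, ∀ y ∈ α.dom, (α.rel x y ↔ β.rel x y)

/-- An enumeration operator: it monotonically enumerates membership facts,
positive atomic facts `R(x, y)` and negative atomic facts `¬ R(x, y)`. -/
structure EOp where
  mem : FinD → Set ℕ
  pos : FinD → Set (ℕ × ℕ)
  neg : FinD → Set (ℕ × ℕ)
  mono_mem : ∀ {α β : FinD}, α.Ext β → mem α ⊆ mem β
  mono_pos : ∀ {α β : FinD}, α.Ext β → pos α ⊆ pos β
  mono_neg : ∀ {α β : FinD}, α.Ext β → neg α ⊆ neg β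

/-- A (possibly infinite) diagram with domain a set of naturals. -/
structure Diag where
  dom : Set ℕ
  rel : ℕ → ℕ → Prop

/-- `α` is a finite subdiagram of `L`. -/
def FinD.SubDiag (α : FinD) (L : Diag) : Prop :=
  ↑α.dom ⊆ L.dom ∧ ∀ x ∈ α.dom, ∀ y ∈ α.dom, (α.rel x y ↔ L.rel x y)

/-- Membership facts enumerated by `Γ` on the diagram `L`. -/
def EOp.memD (Γ : EOp) (L : Diag) : Set ℕ :=
  {x | ∃ α : FinD, α.SubDiag L ∧ x ∈ Γ.mem α}

/-- Positive facts enumerated by `Γ` on the diagram `L`. -/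
def EOp.posD (Γ : EOp) (L : Diag) : Set (ℕ × ℕ) :=
  {p | ∃ α : FinD, α.SubDiag L ∧ p ∈ Γ.pos α}

/-- Negative facts enumerated by `Γ` on the diagram `L`. -/
def EOp.negD (Γ : EOp) (L : Diag) : Set (ℕ × ℕ) :=
  {p | ∃ α : FinD, α.SubDiag L ∧ p ∈ Γ.neg α}

/-- `L` is (the atomic diagram of) a copy of the structure `(τ, r)`. -/
def IsCopyR {τ : Type} (r : τ → τ → Prop) (L : Diag) : Prop :=
  ∃ f : τ → ℕ, Function.Injective f ∧ Set.range f = L.dom ∧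
    ∀ i j : τ, (L.rel (f i) (f j) ↔ r i j)

/-- The output of `Γ` on `L` is (the atomic diagram of) a copy of `(σ, s)`. -/
def EOp.OutCopyR {σ : Type} (Γ : EOp) (s : σ → σ → Prop) (L : Diag) : Prop :=
  ∃ g : σ → ℕ, Function.Injective g ∧ Γ.memD L = Set.range g ∧
    (∀ a b : σ, ((g a, g b) ∈ Γ.posD L ↔ s a b)) ∧
    (∀ a b : σ, ((g a, g b) ∈ Γ.negD L ↔ ¬ s a b))

/-- `{A₁, A₂} ≤_c {B₁, B₂}` : there is an enumeration operator mapping every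
copy of `A₁` to a copy of `B₁` and every copy of `A₂` to a copy of `B₂`. -/
def PairLE {τ₁ τ₂ σ₁ σ₂ : Type} (r₁ : τ₁ → τ₁ → Prop) (r₂ : τ₂ → τ₂ → Prop)
    (s₁ : σ₁ → σ₁ → Prop) (s₂ : σ₂ → σ₂ → Prop) : Prop :=
  ∃ Γ : EOp, (∀ L : Diag, IsCopyR r₁ L → Γ.OutCopyR s₁ L) ∧
    (∀ L : Diag, IsCopyR r₂ L → Γ.OutCopyR s₂ L)

/-- The equivalence structure `E` with infinitely many infinite classes and no
finite classes: classes are the columns of `ℕ × ℕ`. -/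
def relE : ℕ × ℕ → ℕ × ℕ → Prop := fun p q => p.1 = q.1

/-- The equivalence structure `E_k` with infinitely many infinite classes and
exactly one class of size `k`. -/
def relEk (k : ℕ) : (ℕ × ℕ) ⊕ Fin k → (ℕ × ℕ) ⊕ Fin k → Prop := fun x y =>
  match x, y with
  | Sum.inl p, Sum.inl q => p.1 = q.1
  | Sum.inr _, Sum.inr _ => True
  | _, _ => False

/-- The equivalence structure `Ê_k` with infinitely many infinite classes and
infinitely many classes of size exactly `k`. -/
def relEhat (k : ℕ) : (ℕ × ℕ) ⊕ (ℕ × Fin k) → (ℕ × ℕ) ⊕ (ℕ × Fin k) → Prop := fun x y =>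
  match x, y with
  | Sum.inl p, Sum.inl q => p.1 = q.1
  | Sum.inr p, Sum.inr q => p.1 = q.1
  | _, _ => False

/-- The output of `Γ` on `L` is (the full atomic diagram of) a linear order. -/
def EOp.OutLinear (Γ : EOp) (L : Diag) : Prop :=
  (∀ x ∈ Γ.memD L, (x, x) ∉ Γ.posD L) ∧
  (∀ x ∈ Γ.memD L, ∀ y ∈ Γ.memD L, ∀ z ∈ Γ.memD L,
    (x, y) ∈ Γ.posD L → (y, z) ∈ Γ.posD L → (x, z) ∈ Γ.posD L) ∧
  (∀ x ∈ Γ.memD L, ∀ y ∈ Γ.memD L, x ≠ y →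
    (x, y) ∈ Γ.posD L ∨ (y, x) ∈ Γ.posD L) ∧
  (∀ x ∈ Γ.memD L, ∀ y ∈ Γ.memD L, ((x, y) ∈ Γ.negD L ↔ (x, y) ∉ Γ.posD L))

/-- The output linear order has a least element. -/
def EOp.OutHasLeast (Γ : EOp) (L : Diag) : Prop :=
  ∃ x ∈ Γ.memD L, ∀ y ∈ Γ.memD L, y ≠ x → (x, y) ∈ Γ.posD L

/-- The output linear order has a greatest element. -/
def EOp.OutHasGreatest (Γ : EOp) (L : Diag) : Prop :=
  ∃ x ∈ Γ.memD L, ∀ y ∈ Γ.memD L, y ≠ x → (y, x) ∈ Γ.posD L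

/-!
`Γ` lists the increasing tuples of a finite piece of the diagram whose non-last entries have a
second element in their class, coded by `Encodable.encode`, and compares them by `≺`. Being a
tuple and `≺` are witnessed by finitely many facts, so on a copy `L` the output is exactly the set
of tuples of `L` ordered by `≺`, which is a linear order. A singleton `[c]` with `c` large is above
any tuple, so there is never a greatest element. In a copy of `Ê₂` every class has two elements,
so appending a large element to a tuple gives a smaller tuple. In a copy of `Ê₁`, if `b` is the
least element with a singleton class, the tuple of all elements `≤ b` is least: it contains every
element `≤ b`, so another tuple is either a prefix of it, or larger at the first difference, or a
proper extension of it, and the last case would make `b` a non-last entry.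
-/

open Encodable

/-- The paper's `x̄ ≺ ȳ`: it is `ȳ < x̄` in the lexicographic order built from `>` on `ℕ`, so a
proper extension of a tuple is below it. -/
def TupleLT (l m : List ℕ) : Prop :=
  List.Lex (· > ·) m l

instance : IsStrictTotalOrder (List ℕ) TupleLT where
  trichotomous l m h₁ h₂ := (Std.Trichotomous.trichotomous m l h₁ h₂).symm
  irrefl := List.lex_irrefl (lt_irrefl ·)
  trans _ _ _ h₁ h₂ := List.lex_trans (fun h h' => h'.trans h) h₂ h₁

theorem tupleLT_or_isPrefix {l m : List ℕ} {b : ℕ} (hl : l.Pairwise (· < ·))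
    (hm : m.Pairwise (· < ·)) (hlb : ∀ x ∈ l, x ≤ b) (hml : ∀ x ∈ m, x ≤ b → x ∈ l) :
    TupleLT l m ∨ l <+: m := by
  induction l generalizing m with
  | nil => exact Or.inr List.nil_prefix
  | cons a l ih =>
    cases m with
    | nil => exact Or.inl List.Lex.nil
    | cons y m =>
      rw [List.pairwise_cons] at hl hm
      have hay : a ≤ y := by
        by_cases hyb : y ≤ b
        · rcases List.mem_cons.1 (hml y List.mem_cons_self hyb) with rfl | hy
          · exact le_rfl
          · exact (hl.1 y hy).le
        · exact (hlb a List.mem_cons_self).trans (not_le.1 hyb).le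
      rcases hay.lt_or_eq with hay | rfl
      · exact Or.inl (List.Lex.rel hay)
      · have hml' : ∀ x ∈ m, x ≤ b → x ∈ l := fun x hx hxb =>
          (List.mem_cons.1 (hml x (List.mem_cons_of_mem _ hx) hxb)).resolve_left
            (hm.1 x hx).ne'
        rcases ih hl.2 hm.2 (fun x hx => hlb x (List.mem_cons_of_mem _ hx)) hml' with h | h
        · exact Or.inl h.cons
        · exact Or.inr (List.cons_prefix_cons.2 ⟨rfl, h⟩)

section Encoding

variable {α : Type*} [Encodable α]

def encodeRel (T : Set α) (R : α → α → Prop) : Set (ℕ × ℕ) :=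
  Prod.map encode encode '' {p | p.1 ∈ T ∧ p.2 ∈ T ∧ R p.1 p.2}

theorem encodeRel_mono {T T' : Set α} (h : T ⊆ T') (R : α → α → Prop) :
    encodeRel T R ⊆ encodeRel T' R :=
  Set.image_mono fun _ ⟨h₁, h₂, hR⟩ => ⟨h h₁, h h₂, hR⟩

theorem encode_mem_encodeRel {T : Set α} {R : α → α → Prop} {a b : α} :
    (encode a, encode b) ∈ encodeRel T R ↔ a ∈ T ∧ b ∈ T ∧ R a b :=
  (encode_injective.prodMap encode_injective).mem_set_image (a := (a, b))

structure EOp.Presents (Γ : EOp) (L : Diag) (T : Set α) (R : α → α → Prop) : Prop where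
  memD_eq : Γ.memD L = encode '' T
  posD_eq : Γ.posD L = encodeRel T R
  negD_eq : Γ.negD L = encodeRel T fun a b => ¬ R a b

namespace EOp.Presents

variable {Γ : EOp} {L : Diag} {T : Set α} {R : α → α → Prop}

theorem outLinear [IsStrictTotalOrder α R] (h : Γ.Presents L T R) : Γ.OutLinear L := by
  simp only [EOp.OutLinear, h.memD_eq, h.posD_eq, h.negD_eq, Set.forall_mem_image,
    encode_mem_encodeRel, Ne, encode_inj]
  refine ⟨fun a _ h => irrefl_of R a h.2.2,
    fun a ha b _ c hc hab hbc => ⟨ha, hc, trans_of R hab.2.2 hbc.2.2⟩,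
    fun a ha b hb hne => ?_, fun a ha b hb => ⟨fun h h' => h.2.2 h'.2.2,
      fun h => ⟨ha, hb, fun hR => h ⟨ha, hb, hR⟩⟩⟩⟩
  rcases trichotomous_of R a b with hab | rfl | hba
  · exact Or.inl ⟨ha, hb, hab⟩
  · exact absurd rfl hne
  · exact Or.inr ⟨hb, ha, hba⟩

theorem outHasLeast (h : Γ.Presents L T R) (hleast : ∃ a ∈ T, ∀ b ∈ T, b ≠ a → R a b) :
    Γ.OutHasLeast L := by
  obtain ⟨a, ha, hlt⟩ := hleast
  refine ⟨encode a, h.memD_eq ▸ Set.mem_image_of_mem _ ha, ?_⟩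
  rw [h.memD_eq, h.posD_eq]
  rintro _ ⟨b, hb, rfl⟩ hba
  exact encode_mem_encodeRel.2 ⟨ha, hb, hlt b hb (ne_of_apply_ne _ hba)⟩

theorem not_outHasLeast [Std.Asymm R] (h : Γ.Presents L T R) (hlt : ∀ a ∈ T, ∃ b ∈ T, R b a) :
    ¬ Γ.OutHasLeast L := by
  rw [EOp.OutHasLeast, h.memD_eq, h.posD_eq]
  rintro ⟨_, ⟨a, ha, rfl⟩, hleast⟩
  obtain ⟨b, hb, hba⟩ := hlt a ha
  have hne : encode b ≠ encode a := fun he => irrefl_of R a (encode_injective he ▸ hba)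
  exact asymm hba (encode_mem_encodeRel.1 (hleast _ ⟨b, hb, rfl⟩ hne)).2.2

theorem not_outHasGreatest [Std.Asymm R] (h : Γ.Presents L T R)
    (hgt : ∀ a ∈ T, ∃ b ∈ T, R a b) : ¬ Γ.OutHasGreatest L := by
  rw [EOp.OutHasGreatest, h.memD_eq, h.posD_eq]
  rintro ⟨_, ⟨a, ha, rfl⟩, hgreatest⟩
  obtain ⟨b, hb, hab⟩ := hgt a ha
  have hne : encode b ≠ encode a := fun he => irrefl_of R a (encode_injective he ▸ hab)
  exact asymm hab (encode_mem_encodeRel.1 (hgreatest _ ⟨b, hb, rfl⟩ hne)).2.2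

end EOp.Presents

end Encoding

namespace Diag

/-- In an equivalence structure: the class of `x` has at least two elements. -/
def HasNeighbor (L : Diag) (x : ℕ) : Prop :=
  ∃ y ∈ L.dom, y ≠ x ∧ (L.rel x y ∨ L.rel y x)

structure IsTuple (L : Diag) (l : List ℕ) : Prop where
  ne_nil : l ≠ []
  pairwise : l.Pairwise (· < ·)
  subset : ∀ x ∈ l, x ∈ L.dom
  hasNeighbor : ∀ x ∈ l.dropLast, L.HasNeighbor x

end Diag

def FinD.toDiag (α : FinD) : Diag :=
  ⟨α.dom, α.rel⟩

theorem FinD.Ext.subDiag {α β : FinD} (h : α.Ext β) : α.SubDiag β.toDiag :=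
  ⟨Finset.coe_subset.2 h.1, h.2⟩

namespace Diag

variable {L : Diag} {α : FinD} {l : List ℕ}

theorem HasNeighbor.of_subDiag (h : α.SubDiag L) {x : ℕ} (hx : x ∈ α.dom)
    (hn : α.toDiag.HasNeighbor x) : L.HasNeighbor x := by
  obtain ⟨y, hy, hyx, hr⟩ := hn
  exact ⟨y, h.1 hy, hyx, hr.imp (h.2 x hx y hy).1 (h.2 y hy x hx).1⟩

theorem IsTuple.of_subDiag (h : α.SubDiag L) (hl : α.toDiag.IsTuple l) : L.IsTuple l :=
  ⟨hl.ne_nil, hl.pairwise, fun x hx => h.1 (hl.subset x hx), fun x hx =>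
    (hl.hasNeighbor x hx).of_subDiag h (hl.subset x (List.dropLast_subset l hx))⟩

theorem exists_subDiag_hasNeighbor (L : Diag) (E : Finset ℕ) (hE : ↑E ⊆ L.dom) :
    ∃ α : FinD, α.SubDiag L ∧ E ⊆ α.dom ∧
      ∀ x ∈ E, L.HasNeighbor x → α.toDiag.HasNeighbor x := by
  classical
  choose! w hw using fun x (hx : L.HasNeighbor x) => hx
  refine ⟨⟨E ∪ (E.filter L.HasNeighbor).image w, L.rel⟩, ⟨?_, fun _ _ _ _ => Iff.rfl⟩,
    Finset.subset_union_left, fun x hx hn => ⟨w x, ?_, (hw x hn).2⟩⟩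
  · intro y hy
    simp only [Finset.coe_union, Finset.coe_image, Finset.coe_filter, Set.mem_union,
      Finset.mem_coe, Set.mem_image] at hy
    rcases hy with hy | ⟨x, ⟨-, hn⟩, rfl⟩
    · exact hE hy
    · exact (hw x hn).1
  · exact Finset.mem_union_right _ (Finset.mem_image_of_mem w (Finset.mem_filter.2 ⟨hx, hn⟩))

theorem exists_subDiag_isTuple (L : Diag) (s : Finset (List ℕ)) (hs : ∀ l ∈ s, L.IsTuple l) :
    ∃ α : FinD, α.SubDiag L ∧ ∀ l ∈ s, α.toDiag.IsTuple l := by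
  classical
  have hmem {x : ℕ} {l : List ℕ} (hl : l ∈ s) (hx : x ∈ l) : x ∈ s.biUnion List.toFinset :=
    Finset.mem_biUnion.2 ⟨l, hl, List.mem_toFinset.2 hx⟩
  obtain ⟨α, hα, hE, hN⟩ := L.exists_subDiag_hasNeighbor (s.biUnion List.toFinset) (by
    intro x hx
    obtain ⟨l, hl, hx⟩ := Finset.mem_biUnion.1 hx
    exact (hs l hl).subset x (List.mem_toFinset.1 hx))
  refine ⟨α, hα, fun l hl => ⟨(hs l hl).ne_nil, (hs l hl).pairwise,
    fun x hx => hE (hmem hl hx), fun x hx => ?_⟩⟩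
  exact hN x (hmem hl (List.dropLast_subset l hx)) ((hs l hl).hasNeighbor x hx)

theorem setOf_subDiag_encodeRel (L : Diag) (R : List ℕ → List ℕ → Prop) :
    {p | ∃ α : FinD, α.SubDiag L ∧ p ∈ encodeRel {l | α.toDiag.IsTuple l} R} =
      encodeRel {l | L.IsTuple l} R := by
  ext p
  constructor
  · rintro ⟨α, hα, ⟨l, m⟩, ⟨hl, hm, hlm⟩, rfl⟩
    exact ⟨(l, m), ⟨hl.of_subDiag hα, hm.of_subDiag hα, hlm⟩, rfl⟩
  · rintro ⟨⟨l, m⟩, ⟨hl, hm, hlm⟩, rfl⟩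
    obtain ⟨α, hα, hs⟩ := L.exists_subDiag_isTuple {l, m} (by
      simp only [Finset.mem_insert, Finset.mem_singleton]
      rintro _ (rfl | rfl)
      exacts [hl, hm])
    exact ⟨α, hα, (l, m), ⟨hs l (by simp), hs m (by simp), hlm⟩, rfl⟩

end Diag

def tupleOp : EOp where
  mem α := encode '' {l | α.toDiag.IsTuple l}
  pos α := encodeRel {l | α.toDiag.IsTuple l} TupleLT
  neg α := encodeRel {l | α.toDiag.IsTuple l} fun l m => ¬ TupleLT l m
  mono_mem h := Set.image_mono fun _ hl => Diag.IsTuple.of_subDiag h.subDiag hl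
  mono_pos h := encodeRel_mono (fun _ hl => Diag.IsTuple.of_subDiag h.subDiag hl) _
  mono_neg h := encodeRel_mono (fun _ hl => Diag.IsTuple.of_subDiag h.subDiag hl) _

theorem tupleOp_presents (L : Diag) : tupleOp.Presents L {l | L.IsTuple l} TupleLT where
  memD_eq := by
    ext n
    constructor
    · rintro ⟨α, hα, l, hl, rfl⟩
      exact ⟨l, Diag.IsTuple.of_subDiag hα hl, rfl⟩
    · rintro ⟨l, hl, rfl⟩
      obtain ⟨α, hα, hs⟩ := L.exists_subDiag_isTuple {l} (by simpa using hl)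
      exact ⟨α, hα, l, hs l (Finset.mem_singleton_self l), rfl⟩
  posD_eq := L.setOf_subDiag_encodeRel TupleLT
  negD_eq := L.setOf_subDiag_encodeRel fun l m => ¬ TupleLT l m

namespace Diag

variable {L : Diag} {l : List ℕ}

theorem exists_isTuple_tupleLT_right (hinf : L.dom.Infinite) (hl : L.IsTuple l) :
    ∃ m, L.IsTuple m ∧ TupleLT l m := by
  obtain ⟨a, t, rfl⟩ := List.exists_cons_of_ne_nil hl.ne_nil
  obtain ⟨c, hc, hac⟩ := hinf.exists_gt a
  exact ⟨[c], ⟨List.cons_ne_nil c [], List.pairwise_singleton _ c, by simpa using hc, by simp⟩,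
    List.Lex.rel hac⟩

theorem exists_isTuple_tupleLT_left (hinf : L.dom.Infinite)
    (hN : ∀ x ∈ L.dom, L.HasNeighbor x) (hl : L.IsTuple l) :
    ∃ m, L.IsTuple m ∧ TupleLT m l := by
  obtain ⟨c, hc, hlc⟩ := hinf.exists_gt l.sum
  refine ⟨l ++ [c], ⟨by simp, ?_, ?_, ?_⟩, ?_⟩
  · exact List.pairwise_append.2 ⟨hl.pairwise, List.pairwise_singleton _ c,
      fun x hx y hy => List.eq_of_mem_singleton hy ▸ (List.le_sum_of_mem hx).trans_lt hlc⟩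
  · simpa [or_imp, forall_and] using ⟨hl.subset, hc⟩
  · rw [List.dropLast_concat]
    exact fun x hx => hN x (hl.subset x hx)
  · simpa [TupleLT] using List.Lex.append_left _ (List.Lex.nil (a := c) (l := [])) l

theorem exists_least_isTuple (h : ∃ b ∈ L.dom, ¬ L.HasNeighbor b) :
    ∃ l, L.IsTuple l ∧ ∀ m, L.IsTuple m → m ≠ l → TupleLT l m := by
  classical
  obtain ⟨hbL, hbN⟩ := Nat.find_spec h
  set b := Nat.find h
  have below : ∀ x ∈ L.dom, x < b → L.HasNeighbor x := fun x hx hxb =>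
    by_contra fun hn => Nat.find_min h hxb ⟨hx, hn⟩
  set l₀ := (List.range b).filter (· ∈ L.dom)
  have mem_l₀ {x : ℕ} : x ∈ l₀ ↔ x ∈ L.dom ∧ x < b := by simp [l₀, and_comm]
  have hsorted : (l₀ ++ [b]).Pairwise (· < ·) :=
    List.pairwise_append.2 ⟨List.pairwise_lt_range.filter _, List.pairwise_singleton _ b,
      fun x hx y hy => List.eq_of_mem_singleton hy ▸ (mem_l₀.1 hx).2⟩
  refine ⟨l₀ ++ [b], ⟨by simp, hsorted, ?_, ?_⟩, fun m hm hne => ?_⟩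
  · simpa [or_imp, forall_and] using ⟨fun x hx => (mem_l₀.1 hx).1, hbL⟩
  · rw [List.dropLast_concat]
    exact fun x hx => below x (mem_l₀.1 hx).1 (mem_l₀.1 hx).2
  have hml : ∀ x ∈ m, x ≤ b → x ∈ l₀ ++ [b] := fun x hx hxb => by
    rcases hxb.lt_or_eq with hxb | rfl
    · exact List.mem_append_left _ (mem_l₀.2 ⟨hm.subset x hx, hxb⟩)
    · exact List.mem_append_right _ (List.mem_singleton_self _)
  refine (tupleLT_or_isPrefix hsorted hm.pairwise ?_ hml).resolve_right ?_
  · simpa [or_imp, forall_and] using fun x hx => (mem_l₀.1 hx).2.le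
  -- a proper extension of `l₀ ++ [b]` has `b` as a non-last entry
  rintro ⟨t, rfl⟩
  have ht : t ≠ [] := by rintro rfl; exact hne (List.append_nil _)
  refine hbN (hm.hasNeighbor b ?_)
  rw [List.dropLast_append_of_ne_nil ht]
  simp

end Diag

section Copies

variable {τ : Type} {r : τ → τ → Prop} {L : Diag}

theorem IsCopyR.dom_infinite [Infinite τ] (h : IsCopyR r L) : L.dom.Infinite := by
  obtain ⟨f, hf, hrange, -⟩ := h
  exact hrange ▸ Set.infinite_range_of_injective hf

theorem IsCopyR.forall_hasNeighbor (h : IsCopyR r L) (hr : ∀ i, ∃ j ≠ i, r i j) :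
    ∀ x ∈ L.dom, L.HasNeighbor x := by
  obtain ⟨f, hf, hrange, hrel⟩ := h
  rw [← hrange]
  rintro _ ⟨i, rfl⟩
  obtain ⟨j, hji, hij⟩ := hr i
  exact ⟨f j, hrange ▸ ⟨j, rfl⟩, hf.ne hji, Or.inl ((hrel i j).2 hij)⟩

theorem IsCopyR.exists_not_hasNeighbor (h : IsCopyR r L) {i : τ}
    (hi : ∀ j, r i j ∨ r j i → j = i) : ∃ x ∈ L.dom, ¬ L.HasNeighbor x := by
  obtain ⟨f, -, hrange, hrel⟩ := h
  refine ⟨f i, hrange ▸ ⟨i, rfl⟩, ?_⟩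
  rintro ⟨y, hy, hyi, hr⟩
  rw [← hrange] at hy
  obtain ⟨j, rfl⟩ := hy
  exact hyi (congrArg f (hi j (hr.imp (hrel i j).1 (hrel j i).1)))

end Copies

theorem relEhat_exists_ne {k : ℕ} (hk : 2 ≤ k) (i : (ℕ × ℕ) ⊕ (ℕ × Fin k)) :
    ∃ j ≠ i, relEhat k i j := by
  have := Fin.nontrivial_iff_two_le.2 hk
  rcases i with ⟨a, c⟩ | ⟨n, t⟩
  · exact ⟨.inl (a, c + 1), by simp, rfl⟩
  · obtain ⟨t', ht'⟩ := exists_ne t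
    exact ⟨.inr (n, t'), by simpa using ht', rfl⟩

theorem relEhat_one_eq_of_rel {n : ℕ} {t : Fin 1} (j : (ℕ × ℕ) ⊕ (ℕ × Fin 1))
    (h : relEhat 1 (.inr (n, t)) j ∨ relEhat 1 j (.inr (n, t))) : j = .inr (n, t) := by
  rcases j with _ | ⟨m, s⟩
  · simp [relEhat] at h
  · simp only [relEhat, eq_comm, or_self] at h
    rw [h, Subsingleton.elim s t]

/-- there is an enumeration operator `Γ` mapping every copy of
`Ê₁` to a linear order with a least element and no greatest element, and every
copy of `Ê₂` to a linear order with neither least nor greatest element. -/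
theorem equivalence_to_orders :
    ∃ Γ : EOp,
      (∀ L : Diag, IsCopyR (relEhat 1) L →
        Γ.OutLinear L ∧ Γ.OutHasLeast L ∧ ¬ Γ.OutHasGreatest L) ∧
      (∀ L : Diag, IsCopyR (relEhat 2) L →
        Γ.OutLinear L ∧ ¬ Γ.OutHasLeast L ∧ ¬ Γ.OutHasGreatest L) := by
  refine ⟨tupleOp, fun L hL => ?_, fun L hL => ?_⟩
  all_goals
    have hΓ := tupleOp_presents L
    have no_greatest := hΓ.not_outHasGreatest fun _ =>
      L.exists_isTuple_tupleLT_right hL.dom_infinite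
  · have hb := hL.exists_not_hasNeighbor (relEhat_one_eq_of_rel (n := 0) (t := 0))
    exact ⟨hΓ.outLinear, hΓ.outHasLeast (L.exists_least_isTuple hb), no_greatest⟩
  · have hN := hL.forall_hasNeighbor (relEhat_exists_ne le_rfl)
    exact ⟨hΓ.outLinear, hΓ.not_outHasLeast fun _ =>
      L.exists_isTuple_tupleLT_left hL.dom_infinite hN, no_greatest⟩
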